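/- Let G be a DAG whose vertex set is a finite set V of classical split nodes and let Y, Z, W, X be pairwise disjoint subsets of V, with R := V ∖ (Y∪Z∪W∪X). Let G_{X̄} be the DAG obtained from G by deleting every arrow whose head lies in X. If Y and Z are d-separated by W∪X in G_{X̄}, then for every classical process map κ over V that is Markov for G and every local trace-preserving intervention τ_R at R, the do-conditional marginal κ^{τ_R}_{YZW do(X)} := ∑_{X^in} ∑_{R variables} [κ · τ_R] — a function of the Y, Z, W variables together with the output variables X^out — factorizes as α·β, where α is a real-valued function of (Y^in, Y^out, W^in, W^out, X^out) only and β is a real-valued function of (Z^in, Z^out, W^in, W^out, X^out) only. -/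

import Mathlib

open scoped Classical
open BigOperators

noncomputable section

namespace QCM

instance setFintypeOfFintype {α : Type} [Fintype α] (S : Set α) : Fintype ↥S :=
  (Set.toFinite S).fintype

/-! ## Classical split nodes -/

/-- A joint assignment of values to the input (`false`) and output (`true`) variables
of a family of classical split nodes. -/
abbrev CAsg (V : Type) (val : V → ℕ) : Type := ∀ p : V × Bool, Fin (val p.1)

/-- `F` depends only on the variables (legs) in `L`. -/
def DependsOnlyOn {V : Type} {val : V → ℕ} (L : Set (V × Bool))
    (F : CAsg V val → ℝ) : Prop :=
  ∀ ω ω' : CAsg V val, (∀ p ∈ L, ω p = ω' p) → F ω = F ω'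

/-- A classical channel `P(out | in)` on a set of cardinality `n`. -/
def IsCChannel {n : ℕ} (P : Fin n → Fin n → ℝ) : Prop :=
  (∀ i o, 0 ≤ P i o) ∧ ∀ i, ∑ o, P i o = 1

/-- A classical process map over the split nodes `V`. -/
def IsCProcess {V : Type} [Fintype V] (val : V → ℕ) (κ : CAsg V val → ℝ) : Prop :=
  (∀ ω, 0 ≤ κ ω ∧ κ ω ≤ 1) ∧
    ∀ chan : ∀ a, Fin (val a) → Fin (val a) → ℝ, (∀ a, IsCChannel (chan a)) →
      ∑ ω : CAsg V val, κ ω * ∏ a, chan a (ω (a, false)) (ω (a, true)) = 1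

/-- A classical instrument `P(k, out | in)` with outcomes in `Fin m`. -/
def IsCInstrument {n m : ℕ} (q : Fin m → Fin n → Fin n → ℝ) : Prop :=
  (∀ k i o, 0 ≤ q k i o) ∧ ∀ i, ∑ k, ∑ o, q k i o = 1

/-- A maximally informative classical instrument. -/
def IsMaxInf {n m : ℕ} (q : Fin m → Fin n → Fin n → ℝ) : Prop :=
  ∃ gin : Fin m → Fin n, Function.Surjective gin ∧
    ∃ gout : Fin m → Fin n, ∀ k i o, q k i o ≠ 0 → i = gin k ∧ o = gout k

/-- Override the assignment `ω` on the legs in `T` by the values `t`. -/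
def ovr {V : Type} {val : V → ℕ} (T : Set (V × Bool)) (ω : CAsg V val)
    (t : ∀ p : ↥T, Fin (val p.1.1)) : CAsg V val :=
  fun p => if h : p ∈ T then t ⟨p, h⟩ else ω p


/-! ## DAGs and d-separation -/

/-- `G` is a directed acyclic graph. -/
def IsDAG {V : Type} (G : V → V → Prop) : Prop := ∀ v, ¬ Relation.TransGen G v v

/-- A path in `G`: a list of distinct vertices, consecutive ones joined by an arrow
of `G` in either direction. -/
def IsTrail {V : Type} (G : V → V → Prop) (p : List V) : Prop :=
  p.Nodup ∧ p.Chain' fun a b => G a b ∨ G b a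

/-- The path `p` is blocked by the set `W`. -/
def Blocked {V : Type} (G : V → V → Prop) (W : Set V) (p : List V) : Prop :=
  ∃ (i : ℕ) (a w c : V),
    p[i]? = some a ∧ p[i+1]? = some w ∧ p[i+2]? = some c ∧
    ((((G a w ∧ G w c) ∨ (G c w ∧ G w a) ∨ (G w a ∧ G w c)) ∧ w ∈ W) ∨
      ((G a w ∧ G c w) ∧ ∀ r, (r = w ∨ Relation.TransGen G w r) → r ∉ W))

/-- d-separation of `Y` and `Z` by `W` in `G`. -/
def DSep {V : Type} (G : V → V → Prop) (Y Z W : Set V) : Prop :=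
  ∀ p : List V, IsTrail G p →
    (∃ y ∈ Y, p.head? = some y) → (∃ z ∈ Z, p.getLast? = some z) → Blocked G W p

/-- The classical split-node Markov condition for `κ` with respect to `G`. -/
def CMarkovFor {V : Type} [Fintype V] (val : V → ℕ) (G : V → V → Prop)
    (κ : CAsg V val → ℝ) : Prop :=
  ∃ p : ∀ i : V, (∀ j : {j // G j i}, Fin (val j.1)) → Fin (val i) → ℝ,
    (∀ i pa xi, 0 ≤ p i pa xi) ∧ (∀ i pa, ∑ xi, p i pa xi = 1) ∧
    ∀ ω : CAsg V val, κ ω = ∏ i, p i (fun j => ω (j.1, true)) (ω (i, false))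

/-- The do-conditional marginal `κ^{τ_R}_{YZW do(X)}`: the input variables of the
nodes in `SX` and all variables of the nodes in `T` are summed out, the variables of
`T` being weighted by the channels `locT`.  The result is a function of the remaining
variables only. -/
def cDoMarg {V : Type} [Fintype V] (val : V → ℕ) (κ : CAsg V val → ℝ) (SX T : Set V)
    (locT : ∀ a, Fin (val a) → Fin (val a) → ℝ) (ω : CAsg V val) : ℝ :=
  ∑ t : (∀ p : ↥{p : V × Bool | (p.1 ∈ SX ∧ p.2 = false) ∨ p.1 ∈ T}, Fin (val p.1.1)),
    κ (ovr {p : V × Bool | (p.1 ∈ SX ∧ p.2 = false) ∨ p.1 ∈ T} ω t) *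
      ∏ a : ↥T, locT a.1 (t ⟨(a.1, false), Or.inr a.2⟩) (t ⟨(a.1, true), Or.inr a.2⟩)

/-! Write `κ · τ_R` as the product over the nodes of the Markov factor `P(i^in | Pa(i)^out)`,
times the channel at the nodes of `R`. The inputs of `X` and the nodes of `R` that are not
ancestors of `Y ∪ Z ∪ W` in `G_{X̄}` sum out to `1`, childless nodes first. The remaining nodes
split into those coupled to `Y`, through arrows out of `Y ∪ R` and into `R`, and the others;
the two groups read disjoint sets of summed variables, so the sum factorizes.

D-separation enters only to keep `Z` and the children of `Z` out of the group of `Y`. A coupling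
chain is a walk whose non-colliders lie in `Y ∪ R`, hence outside `W ∪ X`, and whose colliders
are ancestors of `Y ∪ Z ∪ W`. Rerouting each collider with no descendant in `W ∪ X` along a
directed path down to `Y` or `Z`, and then cutting out loops, turns it into a d-connecting path
from `Y` to `Z`. -/

section DAG

variable {V : Type} {G H : V → V → Prop}

theorem IsDAG.irrefl (hH : IsDAG H) (a : V) : ¬ H a a :=
  fun h => hH a (.single h)

theorem IsDAG.asymm (hH : IsDAG H) {a b : V} (h : H a b) : ¬ H b a :=
  fun h' => hH a (.tail (.single h) h')

theorem IsDAG.mono (hG : IsDAG G) (h : ∀ a b, H a b → G a b) : IsDAG H :=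
  fun v hv => hG v (Relation.TransGen.mono h _ _ hv)

theorem IsDAG.exists_maximal [Finite V] (hG : IsDAG G) (S : Finset V) (hS : S.Nonempty) :
    ∃ m ∈ S, ∀ i ∈ S, ¬ G m i := by
  have : IsTrans V (flip (Relation.TransGen G)) := ⟨fun _ _ _ h₁ h₂ => h₂.trans h₁⟩
  have : Std.Irrefl (flip (Relation.TransGen G)) := ⟨hG⟩
  obtain ⟨m, hm, hmin⟩ :=
    (Finite.wellFounded_of_trans_of_irrefl (flip (Relation.TransGen G))).has_min (S : Set V) hS
  exact ⟨m, hm, fun i hi h => hmin i hi (.single h)⟩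

end DAG

section Walks

variable {V : Type} (H : V → V → Prop)

def triples : List V → List (V × V × V)
  | a :: b :: c :: l => (a, b, c) :: triples (b :: c :: l)
  | _ => []

@[simp] theorem triples_cons_cons_cons (a b c : V) (l : List V) :
    triples (a :: b :: c :: l) = (a, b, c) :: triples (b :: c :: l) := rfl

@[simp] theorem triples_pair (a b : V) : triples [a, b] = [] := rfl

theorem mem_triples_iff_infix : ∀ {l : List V} {a b c : V},
    (a, b, c) ∈ triples l ↔ [a, b, c] <:+: l
  | x :: y :: z :: l, a, b, c => by
    rw [triples_cons_cons_cons, List.mem_cons, mem_triples_iff_infix (l := y :: z :: l),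
      List.infix_cons_iff (l₂ := y :: z :: l)]
    simp [List.cons_prefix_cons]
  | [], _, _, _ | [_], _, _, _ | [_, _], _, _, _ => by
    simp only [triples, List.not_mem_nil, false_iff]
    intro h
    simpa using h.length_le

theorem triples_append_cons_cons : ∀ (l₁ : List V) (a b : V) (l₂ : List V),
    triples (l₁ ++ a :: b :: l₂) = triples (l₁ ++ [a, b]) ++ triples (a :: b :: l₂)
  | [], _, _, _ => by simp
  | [_], _, _, _ => by simp [triples]
  | x :: y :: l₁, a, b, l₂ => by
    have ih := triples_append_cons_cons (y :: l₁) a b l₂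
    cases l₁ <;> simp_all

def ancestors (S : Set V) : Set V := {v | ∃ s ∈ S, Relation.ReflTransGen H v s}

theorem mem_ancestors_of_reflTransGen {S : Set V} {u v : V} (huv : Relation.ReflTransGen H u v)
    (hv : v ∈ ancestors H S) : u ∈ ancestors H S :=
  let ⟨s, hs, hvs⟩ := hv
  ⟨s, hs, huv.trans hvs⟩

theorem self_mem_ancestors {S : Set V} {v : V} (hv : v ∈ S) : v ∈ ancestors H S :=
  ⟨v, hv, .refl⟩

/-- For `S = W` this is d-connection at the middle vertex; a larger `S` relaxes the condition on
colliders, as for walks that are yet to be rerouted. -/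
def IsActiveTriple (W S : Set V) : V × V × V → Prop
  | (a, b, c) => (H a b ∧ H c b → b ∈ ancestors H S) ∧ (¬ (H a b ∧ H c b) → b ∉ W)

def IsActiveWalk (W S : Set V) (p : List V) : Prop :=
  p.IsChain (fun a b => H a b ∨ H b a) ∧ ∀ t ∈ triples p, IsActiveTriple H W S t

variable {H} {W S : Set V}

theorem IsActiveWalk.infix {l₁ l₂ : List V} (h : IsActiveWalk H W S l₂) (hl : l₁ <:+: l₂) :
    IsActiveWalk H W S l₁ :=
  ⟨h.1.infix hl, fun ⟨_, _, _⟩ ht =>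
    h.2 _ (mem_triples_iff_infix.2 ((mem_triples_iff_infix.1 ht).trans hl))⟩

theorem IsActiveWalk.reverse {l : List V} (h : IsActiveWalk H W S l) :
    IsActiveWalk H W S l.reverse := by
  refine ⟨List.isChain_reverse.2 (h.1.imp fun _ _ => Or.symm), fun ⟨a, b, c⟩ ht => ?_⟩
  have hcba : (c, b, a) ∈ triples l := by
    rw [mem_triples_iff_infix, ← List.reverse_infix]
    simpa [mem_triples_iff_infix] using ht
  obtain ⟨h₁, h₂⟩ := h.2 _ hcba
  exact ⟨fun hab => h₁ hab.symm, fun hab => h₂ fun hcb => hab hcb.symm⟩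

theorem isActiveWalk_pair {a b : V} : IsActiveWalk H W S [a, b] ↔ H a b ∨ H b a := by
  simp [IsActiveWalk]

theorem isActiveWalk_cons_cons_cons {a b c : V} {l : List V} :
    IsActiveWalk H W S (a :: b :: c :: l) ↔
      (H a b ∨ H b a) ∧ IsActiveTriple H W S (a, b, c) ∧ IsActiveWalk H W S (b :: c :: l) := by
  simp only [IsActiveWalk, List.isChain_cons_cons (l := c :: l), triples_cons_cons_cons,
    List.forall_mem_cons]
  tauto

theorem IsActiveWalk.append {l₁ l₂ : List V} {a b : V} (h₁ : IsActiveWalk H W S (l₁ ++ [a, b]))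
    (h₂ : IsActiveWalk H W S (a :: b :: l₂)) : IsActiveWalk H W S (l₁ ++ a :: b :: l₂) := by
  refine ⟨?_, fun t ht => ?_⟩
  · simpa using h₁.1.append_overlap (l₂ := [a, b]) (l₃ := l₂) (by simpa using h₂.1) (by simp)
  · rw [triples_append_cons_cons, List.mem_append] at ht
    exact ht.elim (h₁.2 t) (h₂.2 t)

theorem isActiveWalk_of_isChain (hH : IsDAG H) {a : V} {l : List V} (hl : (a :: l).IsChain H)
    (hW : ∀ x ∈ l, x ∉ W) : IsActiveWalk H W S (a :: l) := by
  refine ⟨hl.imp fun _ _ => Or.inl, fun ⟨x, y, z⟩ ht => ?_⟩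
  obtain ⟨s, t, hst⟩ := mem_triples_iff_infix.1 ht
  have hyz : H y z := List.isChain_pair.1 (hl.infix ⟨s ++ [x], t, by simp [← hst]⟩)
  have hy : y ∈ l := by
    cases s <;> simp only [List.nil_append, List.cons_append, List.cons.injEq] at hst <;>
      simp [← hst.2]
  exact ⟨fun hc => absurd hyz (hH.asymm hc.2), fun _ => hW y hy⟩

theorem IsActiveWalk.mono {S' : Set V} {p : List V} (h : IsActiveWalk H W S p) (hS : S ⊆ S') :
    IsActiveWalk H W S' p :=
  ⟨h.1, fun ⟨_, _, _⟩ ht =>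
    ⟨fun hc => let ⟨s, hs, hbs⟩ := (h.2 _ ht).1 hc; ⟨s, hS hs, hbs⟩, (h.2 _ ht).2⟩⟩

variable (H W) in
def IsBlockingCollider : V × V × V → Prop
  | (a, b, c) => H a b ∧ H c b ∧ b ∉ ancestors H W

variable (H W) in
def blockingColliderCount (p : List V) : ℕ :=
  (triples p).countP fun t => decide (IsBlockingCollider H W t)

theorem blockingColliderCount_append_cons_cons (l₁ : List V) (a b : V) (l₂ : List V) :
    blockingColliderCount H W (l₁ ++ a :: b :: l₂) =
      blockingColliderCount H W (l₁ ++ [a, b]) + blockingColliderCount H W (a :: b :: l₂) := by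
  rw [blockingColliderCount, triples_append_cons_cons, List.countP_append]; rfl

theorem IsActiveWalk.blockingColliderCount_eq_zero {p : List V} (h : IsActiveWalk H W W p) :
    blockingColliderCount H W p = 0 :=
  List.countP_eq_zero.2 fun ⟨_, _, _⟩ ht hb =>
    let ⟨hab, hcb, hb⟩ := of_decide_eq_true hb
    hb ((h.2 _ ht).1 ⟨hab, hcb⟩)

theorem IsActiveWalk.of_blockingColliderCount_eq_zero {p : List V} (h : IsActiveWalk H W S p)
    (h0 : blockingColliderCount H W p = 0) : IsActiveWalk H W W p :=
  ⟨h.1, fun ⟨_, _, _⟩ ht => ⟨fun hc => by_contra fun hb =>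
    List.countP_eq_zero.1 h0 _ ht (decide_eq_true ⟨hc.1, hc.2, hb⟩), (h.2 _ ht).2⟩⟩

theorem reflTransGen_of_mem_of_isChain {a x : V} {l : List V} (hl : (a :: l).IsChain H)
    (hx : x ∈ a :: l) : Relation.ReflTransGen H a x := by
  rcases List.mem_cons.1 hx with rfl | hx
  · exact .refl
  · exact hl.cons_induction _ _ (fun _ _ h h' => h'.tail h) .refl x hx

/-- A blocking collider `w` has a directed path down to some `t ∈ Y ∪ Z` avoiding `W`; restarting
the walk at `t ∈ Y`, or ending it at `t ∈ Z`, removes this blocking collider. -/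
theorem IsActiveWalk.exists_lt_blockingColliderCount (hH : IsDAG H) {Y Z : Set V} {p : List V}
    (h : IsActiveWalk H W (Y ∪ Z ∪ W) p) (hy : ∃ y ∈ Y, p.head? = some y)
    (hz : ∃ z ∈ Z, p.getLast? = some z) {t : V × V × V} (ht : t ∈ triples p)
    (hbad : IsBlockingCollider H W t) :
    ∃ q, IsActiveWalk H W (Y ∪ Z ∪ W) q ∧ (∃ y ∈ Y, q.head? = some y) ∧
      (∃ z ∈ Z, q.getLast? = some z) ∧ blockingColliderCount H W q < blockingColliderCount H W p := by
  obtain ⟨a, w, c⟩ := t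
  obtain ⟨haw, hcw, hwW⟩ := hbad
  obtain ⟨p₁, p₂, rfl⟩ : ∃ p₁ p₂, p = p₁ ++ a :: w :: c :: p₂ := by
    obtain ⟨s, t, hst⟩ := mem_triples_iff_infix.1 ht
    exact ⟨s, t, by simp [← hst]⟩
  have hcount : blockingColliderCount H W (p₁ ++ a :: w :: c :: p₂) =
      blockingColliderCount H W (p₁ ++ [a, w]) + 1 + blockingColliderCount H W (w :: c :: p₂) := by
    rw [blockingColliderCount_append_cons_cons]
    simp [blockingColliderCount, IsBlockingCollider, haw, hcw, hwW]
    ring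
  obtain ⟨t, ht, hwt⟩ := (h.2 (a, w, c) ht).1 ⟨haw, hcw⟩
  obtain ⟨ds, hD, hlast⟩ := List.exists_isChain_cons_of_relationReflTransGen hwt
  have hDW : ∀ x ∈ w :: ds, x ∉ W := fun x hx hxW =>
    hwW (mem_ancestors_of_reflTransGen H (reflTransGen_of_mem_of_isChain hD hx)
      (self_mem_ancestors H hxW))
  have hlast' : (w :: ds).getLast? = some t := by
    rw [List.getLast?_eq_getLast_of_ne_nil (List.cons_ne_nil _ _), hlast]
  rcases ht with (htY | htZ) | htW
  · have hup : IsActiveWalk H W W (ds.reverse ++ [w, c]) := by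
      simpa using (isActiveWalk_of_isChain (S := W) hH (hD.cons_cons hcw) hDW).reverse
    refine ⟨_, (hup.mono Set.subset_union_right).append
      (h.infix (l₁ := w :: c :: p₂) ⟨p₁ ++ [a], [], by simp⟩), ⟨t, htY, ?_⟩, ?_, ?_⟩
    · rw [← hlast', ← List.head?_reverse]
      simp [List.head?_append]
    · simpa [List.getLast?_append_cons] using hz
    · rw [blockingColliderCount_append_cons_cons, hup.blockingColliderCount_eq_zero, hcount]
      omega
  · have hdown := isActiveWalk_of_isChain (S := W) hH (hD.cons_cons haw) hDW
    refine ⟨_, (h.infix (l₁ := p₁ ++ [a, w]) ⟨[], c :: p₂, by simp⟩).append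
      (hdown.mono Set.subset_union_right), ?_, ⟨t, htZ, ?_⟩, ?_⟩
    · simpa [List.head?_append] using hy
    · rw [List.getLast?_append_cons, List.getLast?_cons_cons, hlast']
    · rw [blockingColliderCount_append_cons_cons, hdown.blockingColliderCount_eq_zero, hcount]
      omega
  · exact absurd htW (hDW t (hlast ▸ List.getLast_mem _))

theorem IsActiveWalk.reroute (hH : IsDAG H) {Y Z : Set V} {p : List V}
    (h : IsActiveWalk H W (Y ∪ Z ∪ W) p) (hy : ∃ y ∈ Y, p.head? = some y)
    (hz : ∃ z ∈ Z, p.getLast? = some z) :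
    ∃ q, IsActiveWalk H W W q ∧ (∃ y ∈ Y, q.head? = some y) ∧ (∃ z ∈ Z, q.getLast? = some z) := by
  induction hn : blockingColliderCount H W p using Nat.strong_induction_on generalizing p with
  | _ n ih =>
  by_cases hbad : ∃ t ∈ triples p, IsBlockingCollider H W t
  · obtain ⟨t, ht, hbad⟩ := hbad
    obtain ⟨q, hq, hqy, hqz, hlt⟩ := h.exists_lt_blockingColliderCount hH hy hz ht hbad
    exact ih _ (hn ▸ hlt) hq hqy hqz rfl
  · push Not at hbad
    exact ⟨p, h.of_blockingColliderCount_eq_zero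
      (List.countP_eq_zero.2 fun t ht hb => hbad t ht (of_decide_eq_true hb)), hy, hz⟩

theorem exists_collider_of_not_isChain : ∀ {v b : V} {l : List V},
    (v :: b :: l).IsChain (fun x y => H x y ∨ H y x) → H v b → ¬ (v :: b :: l).IsChain H →
      ∃ x m y, (x, m, y) ∈ triples (v :: b :: l) ∧ H x m ∧ H y m ∧ Relation.TransGen H v m
  | _, _, [], _, hvb, hnot => absurd (List.isChain_pair.2 hvb) hnot
  | v, b, c :: l, hwalk, hvb, hnot => by
    obtain ⟨-, hbc, hwalk⟩ := List.isChain_cons_cons.1 hwalk |>.imp_right List.isChain_cons_cons.1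
    rcases hbc with hbc | hcb
    · obtain ⟨x, m, y, hmem, hxm, hym, hbm⟩ := exists_collider_of_not_isChain
        (List.isChain_cons_cons.2 ⟨.inl hbc, hwalk⟩) hbc
        fun h => hnot (List.isChain_cons_cons.2 ⟨hvb, h⟩)
      exact ⟨x, m, y, List.mem_cons_of_mem _ hmem, hxm, hym, .head hvb hbm⟩
    · exact ⟨v, b, c, by simp, hvb, hcb, .single hvb⟩

theorem IsActiveTriple.splice {a v b d c : V} (h₁ : IsActiveTriple H W S (a, v, b))
    (h₂ : IsActiveTriple H W S (d, v, c)) (hvb : H v b ∨ H b v)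
    (hloop : H v b → v ∈ ancestors H S) : IsActiveTriple H W S (a, v, c) := by
  refine ⟨fun ⟨hav, _⟩ => hvb.elim hloop fun hbv => h₁.1 ⟨hav, hbv⟩, fun hnc => ?_⟩
  by_cases hav : H a v
  · exact h₂.2 fun hdc => hnc ⟨hav, hdc.2⟩
  · exact h₁.2 fun hab => hav hab.1

/-- If the new triple at `v` is a collider while `(a, v, b)` was not, the removed loop leaves `v`
along an arrow and, being no directed cycle, contains a collider below `v`. -/
theorem IsActiveWalk.splice (hH : IsDAG H) {p₁ p₂ p₃ : List V} {v : V}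
    (h : IsActiveWalk H W S (p₁ ++ v :: p₂ ++ v :: p₃)) : IsActiveWalk H W S (p₁ ++ v :: p₃) := by
  rcases List.eq_nil_or_concat p₁ with rfl | ⟨p₁, a, rfl⟩
  · exact h.infix ⟨v :: p₂, [], by simp⟩
  rcases p₃ with _ | ⟨c, p₃⟩
  · exact h.infix ⟨[], p₂ ++ [v], by simp⟩
  rcases p₂ with _ | ⟨b, p₂⟩
  · have := isActiveWalk_pair.1 (h.infix (l₁ := [v, v]) ⟨p₁ ++ [a], c :: p₃, by simp⟩)
    exact (this.elim id id |> hH.irrefl v).elim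
  obtain ⟨L, d, hd⟩ := (List.eq_nil_or_concat (b :: p₂)).resolve_left (List.cons_ne_nil _ _)
  have h₁ : IsActiveTriple H W S (a, v, b) :=
    h.2 _ (mem_triples_iff_infix.2 ⟨p₁, p₂ ++ v :: c :: p₃, by simp⟩)
  have h₂ : IsActiveTriple H W S (d, v, c) :=
    h.2 _ (mem_triples_iff_infix.2 ⟨p₁ ++ [a, v] ++ L, p₃, by rw [hd]; simp⟩)
  have hloop := h.infix (l₁ := v :: b :: (p₂ ++ [v])) ⟨p₁ ++ [a], c :: p₃, by simp⟩
  have hav := isActiveWalk_pair.1 (h.infix (l₁ := [a, v]) ⟨p₁, b :: p₂ ++ v :: c :: p₃, by simp⟩)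
  have hvb := isActiveWalk_pair.1 (hloop.infix (l₁ := [v, b]) ⟨[], p₂ ++ [v], by simp⟩)
  have hsplice : IsActiveTriple H W S (a, v, c) := by
    refine h₁.splice h₂ hvb fun hvb => ?_
    have hcycle : ¬ (v :: b :: (p₂ ++ [v])).IsChain H := fun hc =>
      hH v (.head' hvb (List.relationReflTransGen_of_exists_isChain_cons _
        (List.isChain_cons_cons.1 hc).2 (by simp)))
    obtain ⟨x, m, y, hmem, hxm, hym, hvm⟩ := exists_collider_of_not_isChain hloop.1 hvb hcycle
    exact mem_ancestors_of_reflTransGen H hvm.to_reflTransGen ((hloop.2 _ hmem).1 ⟨hxm, hym⟩)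
  have hpre := h.infix (l₁ := p₁ ++ [a, v]) ⟨[], b :: p₂ ++ v :: c :: p₃, by simp⟩
  have hsuf := h.infix (l₁ := v :: c :: p₃) ⟨p₁ ++ [a] ++ v :: b :: p₂, [], by simp⟩
  simpa using hpre.append (isActiveWalk_cons_cons_cons.2 ⟨hav, hsplice, hsuf⟩)

theorem IsActiveWalk.exists_nodup (hH : IsDAG H) {p : List V} (h : IsActiveWalk H W S p) :
    ∃ q, q.Nodup ∧ IsActiveWalk H W S q ∧ q.head? = p.head? ∧ q.getLast? = p.getLast? := by
  induction hn : p.length using Nat.strong_induction_on generalizing p with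
  | _ n ih =>
  by_cases hp : p.Nodup
  · exact ⟨p, hp, h, rfl, rfl⟩
  obtain ⟨p₁, v, p₂, p₃, rfl⟩ : ∃ p₁ v p₂ p₃, p = p₁ ++ v :: p₂ ++ v :: p₃ := by
    obtain ⟨v, hv⟩ := not_forall_not.1 (mt List.nodup_iff_sublist.2 hp)
    obtain ⟨r₁, r₂, rfl, h₁, h₂⟩ := List.cons_sublist_iff.1 hv
    obtain ⟨p₁, p₂, rfl⟩ := List.append_of_mem h₁
    obtain ⟨s, p₃, rfl⟩ := List.append_of_mem (List.singleton_sublist.1 h₂)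
    exact ⟨p₁, v, p₂ ++ s, p₃, by simp⟩
  obtain ⟨q, hq, hqa, hqh, hql⟩ := ih _ (by simp at hn ⊢; omega) (h.splice hH) rfl
  refine ⟨q, hq, hqa, ?_, ?_⟩
  · rw [hqh]; cases p₁ <;> simp
  · rw [hql, List.getLast?_append_cons, List.getLast?_append_cons]

theorem IsActiveWalk.not_blocked (hH : IsDAG H) {p : List V} (h : IsActiveWalk H W W p) :
    ¬ Blocked H W p := by
  rintro ⟨i, a, w, c, ha, hw, hc, hblock⟩
  have hmem : (a, w, c) ∈ triples p := by
    rw [mem_triples_iff_infix, List.infix_iff_getElem?]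
    refine ⟨i, ?_, fun j hj => ?_⟩
    · have := (List.getElem?_eq_some_iff.1 hc).1
      simp only [List.length_cons, List.length_nil]
      omega
    · simp only [List.length_cons, List.length_nil] at hj
      interval_cases j <;> simpa [add_comm] using ‹_›
  obtain ⟨hcol, hnon⟩ := h.2 _ hmem
  rcases hblock with ⟨hpat, hwW⟩ | ⟨⟨haw, hcw⟩, hdesc⟩
  · refine hnon (fun ⟨haw, hcw⟩ => ?_) hwW
    rcases hpat with ⟨-, hwc⟩ | ⟨-, hwa⟩ | ⟨hwa, -⟩
    exacts [hH.asymm hwc hcw, hH.asymm hwa haw, hH.asymm hwa haw]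
  · obtain ⟨r, hr, hwr⟩ := hcol ⟨haw, hcw⟩
    exact hdesc r (Relation.reflTransGen_iff_eq_or_transGen.1 hwr) hr

theorem DSep.not_isActiveWalk (hH : IsDAG H) {Y Z : Set V} (hsep : DSep H Y Z W) {p : List V}
    (h : IsActiveWalk H W (Y ∪ Z ∪ W) p) (hy : ∃ y ∈ Y, p.head? = some y)
    (hz : ∃ z ∈ Z, p.getLast? = some z) : False := by
  obtain ⟨q, hq, hqy, hqz⟩ := h.reroute hH hy hz
  obtain ⟨r, hr, hra, hrh, hrl⟩ := hq.exists_nodup hH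
  exact hra.not_blocked hH (hsep r ⟨hr, hra.1⟩ (hrh ▸ hqy) (hrl ▸ hqz))

end Walks

section Coupling

variable {V : Type} (H : V → V → Prop) (Y Z W R : Set V)

/-- Nodes whose factors must go to the same side of the factorization: a child reads the output
of a parent in `Y ∪ R`, and a parent in `R` has its summed output read by its child. -/
def Couple (u v : V) : Prop :=
  u ∈ ancestors H (Y ∪ Z ∪ W) ∧ v ∈ ancestors H (Y ∪ Z ∪ W) ∧
    ((u ∈ Y ∪ R ∧ H u v) ∨ (v ∈ R ∧ H v u))

variable {H Y Z W R}

theorem isActiveWalk_of_isChain_couple (hYW : Disjoint Y W) (hRW : Disjoint R W) {p : List V}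
    (hp : p.IsChain (Couple H Y Z W R)) : IsActiveWalk H W (Y ∪ Z ∪ W) p := by
  refine ⟨hp.imp fun _ _ ⟨_, _, h⟩ => h.imp And.right And.right, fun ⟨u, m, w⟩ ht => ?_⟩
  have := hp.infix (mem_triples_iff_infix.1 ht)
  simp only [List.isChain_cons_cons, List.isChain_singleton, and_true] at this
  obtain ⟨⟨-, hm, hum⟩, -, -, hmw⟩ := this
  refine ⟨fun _ => hm, fun hnc => ?_⟩
  rcases hmw with ⟨hmY | hmR, -⟩ | ⟨-, hwm⟩
  · exact hYW.notMem_of_mem_left hmY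
  · exact hRW.notMem_of_mem_left hmR
  · rcases hum with ⟨-, hum⟩ | ⟨hmR, -⟩
    · exact absurd ⟨hum, hwm⟩ hnc
    · exact hRW.notMem_of_mem_left hmR

/-- A coupling chain from `Y`, followed by an arrow from `Z`, is an active walk for the relaxed
collider condition. -/
theorem DSep.notMem_of_reflTransGen_couple (hsep : DSep H Y Z W) (hH : IsDAG H) (hYW : Disjoint Y W)
    (hRW : Disjoint R W) {y v : V} (hy : y ∈ Y)
    (hyv : Relation.ReflTransGen (Couple H Y Z W R) y v) : v ∉ Z ∧ ∀ z ∈ Z, ¬ H z v := by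
  obtain ⟨l, hl, hlast⟩ := List.exists_isChain_cons_of_relationReflTransGen hyv.swap
  have hlast' : (v :: l).getLast? = some y := by
    rw [List.getLast?_eq_getLast_of_ne_nil (List.cons_ne_nil _ _), hlast]
  have hwalk : IsActiveWalk H W (Y ∪ Z ∪ W) (v :: l) := by
    simpa using (isActiveWalk_of_isChain_couple hYW hRW (List.isChain_reverse.2 hl)).reverse
  refine ⟨fun hv => hsep.not_isActiveWalk hH hwalk.reverse
    ⟨y, hy, by rw [List.head?_reverse, hlast']⟩ ⟨v, hv, by simp⟩, fun z hz hzv => ?_⟩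
  have hzwalk : IsActiveWalk H W (Y ∪ Z ∪ W) (z :: v :: l) := by
    rcases l with _ | ⟨x, l⟩
    · exact isActiveWalk_pair.2 (.inl hzv)
    obtain ⟨-, hv, hxv⟩ := (List.isChain_cons_cons.1 hl).1
    refine isActiveWalk_cons_cons_cons.2 ⟨.inl hzv, ⟨fun _ => hv, fun hnc => ?_⟩, hwalk⟩
    rcases hxv with ⟨-, hxv⟩ | ⟨hvR, -⟩
    · exact absurd ⟨hzv, hxv⟩ hnc
    · exact hRW.notMem_of_mem_left hvR
  exact hsep.not_isActiveWalk hH hzwalk.reverse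
    ⟨y, hy, by rw [List.head?_reverse, List.getLast?_cons_cons, hlast']⟩ ⟨z, hz, by simp⟩

end Coupling

section SumOut

variable {V : Type} {val : V → ℕ}

theorem ovr_of_mem {L : Set (V × Bool)} (ω : CAsg V val) (t : ∀ p : ↥L, Fin (val p.1.1))
    {q : V × Bool} (h : q ∈ L) : ovr L ω t q = t ⟨q, h⟩ := dif_pos h

theorem ovr_of_notMem {L : Set (V × Bool)} (ω : CAsg V val) (t : ∀ p : ↥L, Fin (val p.1.1))
    {q : V × Bool} (h : q ∉ L) : ovr L ω t q = ω q := dif_neg h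

theorem DependsOnlyOn.mono {L L' : Set (V × Bool)} {F : CAsg V val → ℝ}
    (hF : DependsOnlyOn L F) (h : L ⊆ L') : DependsOnlyOn L' F :=
  fun ω ω' hω => hF ω ω' fun p hp => hω p (h hp)

theorem dependsOnlyOn_prod {ι : Type} (s : Finset ι) {M : ι → Set (V × Bool)}
    {f : ι → CAsg V val → ℝ} (hf : ∀ i ∈ s, DependsOnlyOn (M i) (f i)) :
    DependsOnlyOn (⋃ i ∈ s, M i) fun σ => ∏ i ∈ s, f i σ :=
  fun ω ω' hω => Finset.prod_congr rfl fun i hi =>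
    hf i hi ω ω' fun p hp => hω p (Set.mem_biUnion (Finset.mem_coe.2 hi) hp)

def nodeLegs (G : V → V → Prop) (i : V) : Set (V × Bool) := {q | q.1 = i ∨ (G q.1 i ∧ q.2 = true)}

theorem dependsOnlyOn_prod_compl {G : V → V → Prop} {f : V → CAsg V val → ℝ}
    (hf : ∀ i, DependsOnlyOn (nodeLegs G i) (f i)) {s : Finset V}
    {M : Set (V × Bool)} (hM : ∀ i ∈ s, ∀ q ∈ nodeLegs G i, q ∉ M) :
    DependsOnlyOn Mᶜ fun σ => ∏ i ∈ s, f i σ :=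
  (dependsOnlyOn_prod s fun i _ => hf i).mono fun q hq => by
    obtain ⟨i, hi, hqi⟩ := Set.mem_iUnion₂.1 hq
    exact hM i hi q hqi

variable [Fintype V]

def sumOut (L : Set (V × Bool)) (F : CAsg V val → ℝ) (ω : CAsg V val) : ℝ :=
  ∑ t : (∀ p : ↥L, Fin (val p.1.1)), F (ovr L ω t)

theorem DependsOnlyOn.sumOut {M L : Set (V × Bool)} {F : CAsg V val → ℝ}
    (hF : DependsOnlyOn M F) : DependsOnlyOn (M \ L) (sumOut L F) :=
  fun ω ω' hω => Finset.sum_congr rfl fun t _ => hF _ _ fun p hp => by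
    by_cases hpL : p ∈ L
    · rw [ovr_of_mem _ _ hpL, ovr_of_mem _ _ hpL]
    · rw [ovr_of_notMem _ _ hpL, ovr_of_notMem _ _ hpL]
      exact hω p ⟨hp, hpL⟩

theorem sumOut_mul_left {L : Set (V × Bool)} {F G : CAsg V val → ℝ} (hF : DependsOnlyOn Lᶜ F)
    (ω : CAsg V val) : sumOut L (fun σ => F σ * G σ) ω = F ω * sumOut L G ω := by
  rw [sumOut, sumOut, Finset.mul_sum]
  exact Finset.sum_congr rfl fun t _ =>
    congrArg (· * _) (hF _ _ fun p hp => ovr_of_notMem _ _ hp)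

theorem sumOut_mul_right {L : Set (V × Bool)} {F G : CAsg V val → ℝ} (hG : DependsOnlyOn Lᶜ G)
    (ω : CAsg V val) : sumOut L (fun σ => F σ * G σ) ω = sumOut L F ω * G ω := by
  simp_rw [mul_comm (F _)]
  rw [sumOut_mul_left hG, mul_comm]

theorem sumOut_union {L₁ L₂ : Set (V × Bool)} (hL : Disjoint L₁ L₂) (F : CAsg V val → ℝ)
    (ω : CAsg V val) : sumOut (L₁ ∪ L₂) F ω = sumOut L₂ (sumOut L₁ F) ω := by
  let e : (∀ p : ↥(L₁ ∪ L₂), Fin (val p.1.1)) ≃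
      (∀ p : ↥L₂, Fin (val p.1.1)) × (∀ p : ↥L₁, Fin (val p.1.1)) :=
    { toFun := fun t => (fun p => t ⟨p, Or.inr p.2⟩, fun p => t ⟨p, Or.inl p.2⟩)
      invFun := fun s p => if h : p.1 ∈ L₁ then s.2 ⟨p, h⟩ else s.1 ⟨p, p.2.resolve_left h⟩
      left_inv := fun t => funext fun p => by dsimp only; split_ifs <;> rfl
      right_inv := fun s => Prod.ext (funext fun p => dif_neg (Set.disjoint_right.1 hL p.2))
        (funext fun p => dif_pos p.2) }
  rw [sumOut]
  convert Fintype.sum_equiv e _ (fun s => F (ovr _ ω (e.symm s)))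
    fun t => by rw [e.symm_apply_apply]
  rw [Fintype.sum_prod_type]
  refine Finset.sum_congr rfl fun t₂ _ => Finset.sum_congr rfl fun t₁ _ =>
    congrArg F (funext fun q => ?_)
  by_cases h₁ : q ∈ L₁
  · rw [ovr_of_mem (L := L₁) _ _ h₁, ovr_of_mem (L := L₁ ∪ L₂) _ _ (Or.inl h₁)]
    exact (dif_pos h₁ : e.symm (t₂, t₁) ⟨q, _⟩ = _).symm
  by_cases h₂ : q ∈ L₂
  · rw [ovr_of_notMem (L := L₁) _ _ h₁, ovr_of_mem (L := L₂) _ _ h₂,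
      ovr_of_mem (L := L₁ ∪ L₂) _ _ (Or.inr h₂)]
    exact (dif_neg h₁ : e.symm (t₂, t₁) ⟨q, _⟩ = _).symm
  · rw [ovr_of_notMem (L := L₁) _ _ h₁, ovr_of_notMem (L := L₂) _ _ h₂,
      ovr_of_notMem (L := L₁ ∪ L₂) _ _ fun h => h.elim h₁ h₂]

theorem sumOut_singleton (q : V × Bool) (F : CAsg V val → ℝ) (ω : CAsg V val) :
    sumOut {q} F ω = ∑ a : Fin (val q.1), F (Function.update ω q a) := by
  rw [sumOut]
  convert Fintype.sum_equiv (Equiv.piUnique fun p : ↥({q} : Set (V × Bool)) => Fin (val p.1.1))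
    (fun t => F (ovr {q} ω t)) (fun a => F (Function.update ω q a))
    fun t => congrArg F (funext fun p => ?_)
  by_cases hp : p = q
  · subst hp
    rw [ovr_of_mem (L := {p}) _ _ rfl, Function.update_self]
    rfl
  · rw [ovr_of_notMem (L := {q}) _ _ hp, Function.update_of_ne hp]

theorem sumOut_union_mul {L₁ L₂ : Set (V × Bool)} (hL : Disjoint L₁ L₂) {F G : CAsg V val → ℝ}
    (hF : DependsOnlyOn L₂ᶜ F) (hG : DependsOnlyOn L₁ᶜ G) (ω : CAsg V val) :
    sumOut (L₁ ∪ L₂) (fun σ => F σ * G σ) ω = sumOut L₁ F ω * sumOut L₂ G ω := by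
  rw [sumOut_union hL, show sumOut L₁ (fun σ => F σ * G σ) = fun σ => sumOut L₁ F σ * G σ
    from funext (sumOut_mul_right hG)]
  exact sumOut_mul_left (hF.sumOut.mono Set.sdiff_subset) ω

end SumOut

section Factorization

variable {V : Type} [Fintype V] {val : V → ℕ} {G : V → V → Prop} {K : Set (V × Bool)}
  {f : V → CAsg V val → ℝ}

/-- Eliminate a node without children in `S`: no other factor reads its variables. -/
theorem sumOut_prod_eq_one (hG : IsDAG G) (hf : ∀ i, DependsOnlyOn (nodeLegs G i) (f i))
    (hnorm : ∀ i ω, sumOut {q | q.1 = i ∧ q ∈ K} (f i) ω = 1) (S : Finset V) (ω : CAsg V val) :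
    sumOut {q | q.1 ∈ S ∧ q ∈ K} (fun σ => ∏ i ∈ S, f i σ) ω = 1 := by
  induction S using Finset.strongInduction generalizing ω with
  | H S ih =>
  rcases S.eq_empty_or_nonempty with rfl | hS
  · simp [sumOut]
  obtain ⟨m, hm, hmax⟩ := hG.exists_maximal S hS
  have hL : {q : V × Bool | q.1 ∈ S ∧ q ∈ K} =
      {q | q.1 = m ∧ q ∈ K} ∪ {q | q.1 ∈ S.erase m ∧ q ∈ K} := by
    ext q
    by_cases hq : q.1 = m <;> simp [hq, hm]
  have hdisj : Disjoint {q : V × Bool | q.1 = m ∧ q ∈ K} {q | q.1 ∈ S.erase m ∧ q ∈ K} :=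
    Set.disjoint_left.2 fun q h h' => (Finset.mem_erase.1 h'.1).1 h.1
  have hrest : DependsOnlyOn {q : V × Bool | q.1 = m ∧ q ∈ K}ᶜ
      fun σ => ∏ i ∈ S.erase m, f i σ := by
    refine dependsOnlyOn_prod_compl hf fun i hi q hq hqm => ?_
    obtain ⟨him, hiS⟩ := Finset.mem_erase.1 hi
    rcases hq with hq | ⟨hq, -⟩
    · exact him (hq ▸ hqm.1)
    · exact hmax i hiS (hqm.1 ▸ hq)
  have hsum : sumOut {q | q.1 = m ∧ q ∈ K} (fun σ => ∏ i ∈ S, f i σ) =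
      fun σ => ∏ i ∈ S.erase m, f i σ := funext fun σ => by
    simp_rw [← Finset.mul_prod_erase S _ hm]
    rw [sumOut_mul_right hrest, hnorm, one_mul]
  rw [hL, sumOut_union hdisj, hsum, ih _ (Finset.erase_ssubset hm)]

/-- The nodes outside `A ∪ B` sum out to `1` by `sumOut_prod_eq_one`. -/
theorem sumOut_prod_eq_mul (hG : IsDAG G) (hf : ∀ i, DependsOnlyOn (nodeLegs G i) (f i))
    (hnorm : ∀ i ω, sumOut {q | q.1 = i ∧ q ∈ K} (f i) ω = 1) {T : Set V} {A B : Finset V}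
    (hAB : Disjoint A B) (hT : ∀ i, i ∉ A → i ∉ B → i ∈ T)
    (hA : ∀ i ∈ A, ∀ q ∈ nodeLegs G i, q ∈ K → q.1 ∈ T → q.1 ∈ A)
    (hB : ∀ i ∈ B, ∀ q ∈ nodeLegs G i, q ∈ K → q.1 ∈ T → q.1 ∈ B) (ω : CAsg V val) :
    sumOut {q | q.1 ∈ T ∧ q ∈ K} (fun σ => ∏ i, f i σ) ω =
      sumOut {q | q.1 ∈ A ∧ q.1 ∈ T ∧ q ∈ K} (fun σ => ∏ i ∈ A, f i σ) ω *
        sumOut {q | q.1 ∈ B ∧ q.1 ∈ T ∧ q ∈ K} (fun σ => ∏ i ∈ B, f i σ) ω := by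
  set C := (A ∪ B)ᶜ
  set LA := {q : V × Bool | q.1 ∈ A ∧ q.1 ∈ T ∧ q ∈ K}
  set LB := {q : V × Bool | q.1 ∈ B ∧ q.1 ∈ T ∧ q ∈ K}
  set LC := {q : V × Bool | q.1 ∈ C ∧ q ∈ K}
  have hCT : ∀ i ∈ C, i ∈ T := fun i hi => by
    simp only [C, Finset.mem_compl, Finset.mem_union, not_or] at hi
    exact hT i hi.1 hi.2
  have hL : {q | q.1 ∈ T ∧ q ∈ K} = LC ∪ (LA ∪ LB) := by
    ext q
    by_cases hqA : q.1 ∈ A <;> by_cases hqB : q.1 ∈ B <;>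
      simp only [C, LA, LB, LC, Set.mem_ofPred_eq, Set.mem_union, Finset.mem_compl,
        Finset.mem_union, hqA, hqB] <;> grind
  have hdisj : Disjoint LA LB := Set.disjoint_left.2 fun q hA hB =>
    Finset.disjoint_left.1 hAB hA.1 hB.1
  have hdisjC : Disjoint LC (LA ∪ LB) := Set.disjoint_left.2 fun q hC hAB' => by
    simp only [C, LC, Set.mem_ofPred_eq, Finset.mem_compl, Finset.mem_union] at hC
    exact hC.1 (hAB'.elim (fun h => .inl h.1) fun h => .inr h.1)
  have hclosed {S : Finset V} (hS : ∀ i ∈ S, ∀ q ∈ nodeLegs G i, q ∈ K → q.1 ∈ T → q.1 ∈ S)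
      {M : Set (V × Bool)} (hM : ∀ q ∈ M, q ∈ K ∧ q.1 ∈ T ∧ q.1 ∉ S) :
      DependsOnlyOn Mᶜ fun σ => ∏ i ∈ S, f i σ :=
    dependsOnlyOn_prod_compl hf fun i hi q hq hqM =>
      (hM q hqM).2.2 (hS i hi q hq (hM q hqM).1 (hM q hqM).2.1)
  have hsumC : sumOut LC (fun σ => ∏ i, f i σ) =
      fun σ => (∏ i ∈ A, f i σ) * ∏ i ∈ B, f i σ := by
    funext σ
    have hABC : DependsOnlyOn LCᶜ fun σ => ∏ i ∈ A ∪ B, f i σ := by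
      refine hclosed (fun i hi q hq hK hqT => ?_) fun q hq => ?_
      · rcases Finset.mem_union.1 hi with hi | hi
        exacts [Finset.mem_union_left _ (hA i hi q hq hK hqT),
          Finset.mem_union_right _ (hB i hi q hq hK hqT)]
      · simp only [C, LC, Set.mem_ofPred_eq, Finset.mem_compl] at hq
        exact ⟨hq.2, hCT _ (Finset.mem_compl.2 hq.1), hq.1⟩
    simp_rw [← Finset.prod_mul_prod_compl (A ∪ B) (f · _)]
    rw [sumOut_mul_left hABC, sumOut_prod_eq_one hG hf hnorm, mul_one, Finset.prod_union hAB]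
  rw [hL, sumOut_union hdisjC, hsumC]
  exact sumOut_union_mul hdisj
    (hclosed hA fun q hq => ⟨hq.2.2, hq.2.1, Finset.disjoint_right.1 hAB hq.1⟩)
    (hclosed hB fun q hq => ⟨hq.2.2, hq.2.1, Finset.disjoint_left.1 hAB hq.1⟩) ω

end Factorization

section DoMarginal

variable {V : Type} {val : V → ℕ} {G : V → V → Prop}
  (pk : ∀ i : V, (∀ j : {j // G j i}, Fin (val j.1)) → Fin (val i) → ℝ) (R : Set V)
  (loc : ∀ a, Fin (val a) → Fin (val a) → ℝ)

/-- The factor of node `i` in `κ · τ_R` when `κ = ∏ᵢ pk i`. -/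
def nodeFactor (i : V) (σ : CAsg V val) : ℝ :=
  pk i (fun j => σ (j.1, true)) (σ (i, false)) *
    if i ∈ R then loc i (σ (i, false)) (σ (i, true)) else 1

/-- At a node of `X ∪ R` the do-marginal sums out the input, and at `R` also the output. -/
def summedLegs : Set (V × Bool) := {q | q.2 = false ∨ q.1 ∈ R}

theorem dependsOnlyOn_nodeFactor (i : V) :
    DependsOnlyOn (nodeLegs G i) (nodeFactor (val := val) pk R loc i) := fun ω ω' h => by
  have hpa : (fun j : {j // G j i} => ω (j.1, true)) = fun j : {j // G j i} => ω' (j.1, true) :=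
    funext fun j : {j // G j i} => h _ (.inr ⟨j.2, rfl⟩)
  simp only [nodeFactor, hpa, h (i, false) (.inl rfl), h (i, true) (.inl rfl)]

variable [Fintype V]

theorem sumOut_nodeFactor (hG : IsDAG G) (hpk : ∀ i pa, ∑ x, pk i pa x = 1)
    (hloc : ∀ a ∈ R, IsCChannel (loc a)) (i : V) (ω : CAsg V val) :
    sumOut {q | q.1 = i ∧ q ∈ summedLegs R} (nodeFactor pk R loc i) ω = 1 := by
  have hpa (σ : CAsg V val) (b : Bool) (x : Fin (val i)) :
      (fun j : {j // G j i} => Function.update σ (i, b) x (j.1, true)) =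
        fun j : {j // G j i} => σ (j.1, true) :=
    funext fun j => Function.update_of_ne (fun h => hG.irrefl i (by
      have hj : (j : V) = i := congrArg Prod.fst h
      simpa [hj] using j.2)) _ _
  by_cases hi : i ∈ R
  · have hL : {q : V × Bool | q.1 = i ∧ q ∈ summedLegs R} = {(i, true)} ∪ {(i, false)} := by
      ext ⟨j, b⟩
      by_cases hj : j = i <;> cases b <;> simp [summedLegs, hj, hi]
    rw [hL, sumOut_union (by simp), sumOut_singleton]
    simp [sumOut_singleton, nodeFactor, hi, hpa, ← Finset.mul_sum, (hloc i hi).2, hpk]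
  · have hL : {q : V × Bool | q.1 = i ∧ q ∈ summedLegs R} = {(i, false)} := by
      ext ⟨j, b⟩
      by_cases hj : j = i <;> cases b <;> simp [summedLegs, hj, hi]
    rw [hL, sumOut_singleton]
    simp [nodeFactor, hi, hpk]

theorem cDoMarg_eq_sumOut {κ : CAsg V val → ℝ}
    (hκ : ∀ ω, κ ω = ∏ i, pk i (fun j => ω (j.1, true)) (ω (i, false))) (SX : Set V)
    (ω : CAsg V val) :
    cDoMarg val κ SX R loc ω = sumOut {p | (p.1 ∈ SX ∧ p.2 = false) ∨ p.1 ∈ R}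
      (fun σ => ∏ i, nodeFactor pk R loc i σ) ω := by
  refine Finset.sum_congr rfl fun t _ => ?_
  have hloc (a : ↥R) : loc a (t ⟨(a, false), Or.inr a.2⟩) (t ⟨(a, true), Or.inr a.2⟩) =
      loc a (ovr {p : V × Bool | (p.1 ∈ SX ∧ p.2 = false) ∨ p.1 ∈ R} ω t (a, false))
        (ovr {p : V × Bool | (p.1 ∈ SX ∧ p.2 = false) ∨ p.1 ∈ R} ω t (a, true)) := by
    rw [ovr_of_mem _ _ (Or.inr a.2), ovr_of_mem _ _ (Or.inr a.2)]
  have hR (g : V → ℝ) : ∏ a : ↥R, g a = ∏ a, if a ∈ R then g a else 1 := by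
    rw [← Finset.prod_filter]
    exact (Finset.prod_subtype _ (by simp) g).symm
  simp only [nodeFactor, Finset.prod_mul_distrib, hκ, hloc]
  exact congrArg _ (hR fun a => loc a (ovr _ ω t (a, false)) (ovr _ ω t (a, true)))

end DoMarginal

section Rule1

variable {V : Type} {val : V → ℕ} {G : V → V → Prop} {SY SZ SW SX : Set V}

/-- The nodes whose factors form the factor of the do-marginal that ignores the variables of `E`. -/
def IsSide (G : V → V → Prop) (E R : Set V) (A : Finset V) : Prop :=
  ∀ i ∈ A, i ∉ E ∧ ∀ j, G j i → j ∉ E ∧ (j ∈ R → j ∈ A)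

theorem IsSide.mem {E R : Set V} {A : Finset V} (hA : IsSide G E R A) {i : V} (hi : i ∈ A)
    {q : V × Bool} (hq : q ∈ nodeLegs G i) (hqR : q ∈ summedLegs R) : q.1 ∈ A := by
  rcases hq with hq | ⟨hji, hq⟩
  · exact hq ▸ hi
  · exact (hA i hi).2 q.1 hji |>.2 (hqR.resolve_left (by simp [hq]))

variable [Fintype V]

theorem IsSide.dependsOnlyOn_sumOut {E R : Set V} {A : Finset V} (hA : IsSide G E R A)
    (pk : ∀ i : V, (∀ j : {j // G j i}, Fin (val j.1)) → Fin (val i) → ℝ)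
    (loc : ∀ a, Fin (val a) → Fin (val a) → ℝ) :
    DependsOnlyOn {q | q.1 ∉ R ∧ q.1 ∉ E ∧ (q.1 ∈ SX → q.2 = true)}
      (sumOut {q | q.1 ∈ A ∧ q.1 ∈ SX ∪ R ∧ q ∈ summedLegs R}
        fun σ => ∏ i ∈ A, nodeFactor pk R loc i σ) := by
  refine (dependsOnlyOn_prod A fun i _ => dependsOnlyOn_nodeFactor pk R loc i).sumOut.mono ?_
  rintro ⟨j, b⟩ ⟨hq, hqL⟩
  obtain ⟨i, hi, hqi⟩ := Set.mem_iUnion₂.1 hq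
  obtain ⟨hjE, hjR, hjX⟩ : j ∉ E ∧ (j ∈ R → j ∈ A) ∧ (b = false → j ∈ A) := by
    rcases hqi with rfl | ⟨hji, rfl⟩
    · exact ⟨(hA j hi).1, fun _ => hi, fun _ => hi⟩
    · exact ⟨((hA i hi).2 j hji).1, ((hA i hi).2 j hji).2, nofun⟩
  refine ⟨fun hR => hqL ⟨hjR hR, .inr hR, .inr hR⟩, hjE, fun hX => ?_⟩
  cases b
  · exact absurd ⟨hjX rfl, .inl hX, .inl rfl⟩ hqL
  · rfl

theorem exists_cDoMarg_eq_mul (hG : IsDAG G) {κ : CAsg V val → ℝ} (hκ : CMarkovFor val G κ)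
    {locR : ∀ a, Fin (val a) → Fin (val a) → ℝ}
    (hlocR : ∀ a ∈ (SY ∪ SZ ∪ SW ∪ SX)ᶜ, IsCChannel (locR a)) {A B : Finset V}
    (hAB : Disjoint A B) (hcover : ∀ i, i ∉ A → i ∉ B → i ∈ SX ∪ (SY ∪ SZ ∪ SW ∪ SX)ᶜ)
    (hA : IsSide G SZ (SY ∪ SZ ∪ SW ∪ SX)ᶜ A) (hB : IsSide G SY (SY ∪ SZ ∪ SW ∪ SX)ᶜ B) :
    ∃ α β : CAsg V val → ℝ,
      DependsOnlyOn {p : V × Bool | p.1 ∈ SY ∨ p.1 ∈ SW ∨ (p.1 ∈ SX ∧ p.2 = true)} α ∧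
      DependsOnlyOn {p : V × Bool | p.1 ∈ SZ ∨ p.1 ∈ SW ∨ (p.1 ∈ SX ∧ p.2 = true)} β ∧
      ∀ ω, cDoMarg val κ SX ((SY ∪ SZ ∪ SW ∪ SX)ᶜ) locR ω = α ω * β ω := by
  obtain ⟨pk, -, hpk, hκ⟩ := hκ
  set R := (SY ∪ SZ ∪ SW ∪ SX)ᶜ with hR
  have hside {E : Set V} : {q : V × Bool | q.1 ∉ R ∧ q.1 ∉ E ∧ (q.1 ∈ SX → q.2 = true)} ⊆
      {q | q.1 ∈ SY ∪ SZ ∪ SW ∪ SX ∧ q.1 ∉ E ∧ (q.1 ∈ SX → q.2 = true)} := by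
    rintro q ⟨h, hq⟩
    exact ⟨not_not.1 h, hq⟩
  refine ⟨_, _, (hA.dependsOnlyOn_sumOut (SX := SX) pk locR).mono (hside.trans ?_),
    (hB.dependsOnlyOn_sumOut (SX := SX) pk locR).mono (hside.trans ?_), fun ω => ?_⟩
  · rintro ⟨j, b⟩ ⟨hj, hjE, hjX⟩
    simp only [Set.mem_union] at hj
    tauto
  · rintro ⟨j, b⟩ ⟨hj, hjE, hjX⟩
    simp only [Set.mem_union] at hj
    tauto
  have hL : {p : V × Bool | (p.1 ∈ SX ∧ p.2 = false) ∨ p.1 ∈ R} =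
      {q | q.1 ∈ SX ∪ R ∧ q ∈ summedLegs R} := by
    ext ⟨j, b⟩
    simp only [summedLegs, Set.mem_ofPred_eq, Set.mem_union]
    tauto
  rw [cDoMarg_eq_sumOut pk R locR hκ, hL]
  exact sumOut_prod_eq_mul hG (dependsOnlyOn_nodeFactor pk R locR)
    (sumOut_nodeFactor pk R locR hG hpk hlocR) hAB hcover
    (fun i hi q hq hqR _ => hA.mem hi hq hqR) (fun i hi q hq hqR _ => hB.mem hi hq hqR) ω

/-- The side of `Y` consists of the non-intervened ancestors of `Y ∪ Z ∪ W` coupled to `Y`, the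
side of `Z` of the others; d-separation keeps `Z` and its children off the side of `Y`. -/
theorem exists_sides (hG : IsDAG G) (hYW : Disjoint SY SW) (hYX : Disjoint SY SX)
    (hsep : DSep (fun a b => G a b ∧ b ∉ SX) SY SZ (SW ∪ SX)) :
    ∃ A B : Finset V, Disjoint A B ∧ (∀ i, i ∉ A → i ∉ B → i ∈ SX ∪ (SY ∪ SZ ∪ SW ∪ SX)ᶜ) ∧
      IsSide G SZ (SY ∪ SZ ∪ SW ∪ SX)ᶜ A ∧ IsSide G SY (SY ∪ SZ ∪ SW ∪ SX)ᶜ B := by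
  set H : V → V → Prop := fun a b => G a b ∧ b ∉ SX
  set R := (SY ∪ SZ ∪ SW ∪ SX)ᶜ
  set An := ancestors H (SY ∪ SZ ∪ (SW ∪ SX))
  set Reach : V → Prop :=
    fun v => ∃ y ∈ SY, Relation.ReflTransGen (Couple H SY SZ (SW ∪ SX) R) y v
  have hH : IsDAG H := hG.mono fun _ _ h => h.1
  have hRW : Disjoint R (SW ∪ SX) := Set.disjoint_left.2 fun v hv hWX =>
    hv (hWX.elim (fun h => .inl (.inr h)) .inr)
  have hsafe (v : V) (hv : Reach v) : v ∉ SZ ∧ ∀ z ∈ SZ, ¬ H z v :=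
    let ⟨_, hy, hyv⟩ := hv
    hsep.notMem_of_reflTransGen_couple hH (Disjoint.union_right hYW hYX) hRW hy hyv
  have hstep {u v : V} (hu : Reach u) (huv : Couple H SY SZ (SW ∪ SX) R u v) : Reach v :=
    let ⟨y, hy, hyu⟩ := hu
    ⟨y, hy, hyu.tail huv⟩
  have hpar {j i : V} (hji : H j i) (hi : i ∈ An) : j ∈ An :=
    mem_ancestors_of_reflTransGen H (.single hji) hi
  refine ⟨Finset.univ.filter fun i => i ∉ SX ∧ i ∈ An ∧ Reach i,
    Finset.univ.filter fun i => i ∉ SX ∧ i ∈ An ∧ ¬ Reach i, ?_, ?_, ?_, ?_⟩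
  · exact Finset.disjoint_left.2 fun i hA hB => by simp_all
  · intro i hA hB
    by_cases hX : i ∈ SX
    · exact .inl hX
    have hAn : i ∉ An := fun hAn => by by_cases hR : Reach i <;> simp_all
    refine .inr fun hi => hAn (self_mem_ancestors H ?_)
    simp only [Set.mem_union] at hi ⊢
    tauto
  · intro i hi
    simp only [Finset.mem_filter, Finset.mem_univ, true_and] at hi
    obtain ⟨hiX, hiAn, hiR⟩ := hi
    refine ⟨(hsafe i hiR).1, fun j hji => ⟨fun hjZ => (hsafe i hiR).2 j hjZ ⟨hji, hiX⟩,
      fun hjR => ?_⟩⟩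
    simp only [Finset.mem_filter, Finset.mem_univ, true_and]
    exact ⟨fun hjX => hjR (.inr hjX), hpar ⟨hji, hiX⟩ hiAn,
      hstep hiR ⟨hiAn, hpar ⟨hji, hiX⟩ hiAn, .inr ⟨hjR, hji, hiX⟩⟩⟩
  · intro i hi
    simp only [Finset.mem_filter, Finset.mem_univ, true_and] at hi
    obtain ⟨hiX, hiAn, hiR⟩ := hi
    refine ⟨fun hiY => hiR ⟨i, hiY, .refl⟩, fun j hji => ⟨fun hjY => hiR (hstep ⟨j, hjY, .refl⟩
      ⟨hpar ⟨hji, hiX⟩ hiAn, hiAn, .inl ⟨.inl hjY, hji, hiX⟩⟩), fun hjR => ?_⟩⟩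
    simp only [Finset.mem_filter, Finset.mem_univ, true_and]
    exact ⟨fun hjX => hjR (.inr hjX), hpar ⟨hji, hiX⟩ hiAn, fun hj => hiR (hstep hj
      ⟨hpar ⟨hji, hiX⟩ hiAn, hiAn, .inl ⟨.inr hjR, hji, hiX⟩⟩)⟩

end Rule1

theorem rule1_classical_general
    {V : Type} [Fintype V] (val : V → ℕ)
    (G : V → V → Prop) (hG : IsDAG G)
    (SY SZ SW SX : Set V)
    (hYW : Disjoint SY SW) (hYX : Disjoint SY SX)
    (hsep : DSep (fun a b => G a b ∧ b ∉ SX) SY SZ (SW ∪ SX)) :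
    ∀ κ : CAsg V val → ℝ, IsCProcess val κ → CMarkovFor val G κ →
      ∀ locR : ∀ a, Fin (val a) → Fin (val a) → ℝ,
        (∀ a ∈ (SY ∪ SZ ∪ SW ∪ SX)ᶜ, IsCChannel (locR a)) →
        ∃ α β : CAsg V val → ℝ,
          DependsOnlyOn
            {p : V × Bool | p.1 ∈ SY ∨ p.1 ∈ SW ∨ (p.1 ∈ SX ∧ p.2 = true)} α ∧
          DependsOnlyOn
            {p : V × Bool | p.1 ∈ SZ ∨ p.1 ∈ SW ∨ (p.1 ∈ SX ∧ p.2 = true)} β ∧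
          ∀ ω, cDoMarg val κ SX ((SY ∪ SZ ∪ SW ∪ SX)ᶜ) locR ω = α ω * β ω := by
  intro κ _ hκ locR hlocR
  obtain ⟨A, B, hAB, hcover, hA, hB⟩ := exists_sides hG hYW hYX hsep
  exact exists_cDoMarg_eq_mul hG hκ hlocR hAB hcover hA hB

/-- **Analogue of rule 1 of the do-calculus for classical process maps.**
If `Y` and `Z` are d-separated by `W ∪ X` in the DAG obtained from `G` by deleting all
arrows into `X`, then for every classical process map Markov for `G` and every local
trace-preserving intervention at the remaining nodes `R`, the do-conditional marginal
`κ^{τ_R}_{YZW do(X)}` factorizes as `α · β` with `α` a function of the `Y`, `W`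
variables and the `X` outputs only, and `β` a function of the `Z`, `W` variables and
the `X` outputs only. -/
theorem rule1_classical
    {V : Type} [Fintype V] (val : V → ℕ) (hval : ∀ a, 0 < val a)
    (G : V → V → Prop) (hG : IsDAG G)
    (SY SZ SW SX : Set V)
    (hYZ : Disjoint SY SZ) (hYW : Disjoint SY SW) (hYX : Disjoint SY SX)
    (hZW : Disjoint SZ SW) (hZX : Disjoint SZ SX) (hWX : Disjoint SW SX)
    (hsep : DSep (fun a b => G a b ∧ b ∉ SX) SY SZ (SW ∪ SX)) :
    ∀ κ : CAsg V val → ℝ, IsCProcess val κ → CMarkovFor val G κ →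
      ∀ locR : ∀ a, Fin (val a) → Fin (val a) → ℝ,
        (∀ a ∈ (SY ∪ SZ ∪ SW ∪ SX)ᶜ, IsCChannel (locR a)) →
        ∃ α β : CAsg V val → ℝ,
          DependsOnlyOn
            {p : V × Bool | p.1 ∈ SY ∨ p.1 ∈ SW ∨ (p.1 ∈ SX ∧ p.2 = true)} α ∧
          DependsOnlyOn
            {p : V × Bool | p.1 ∈ SZ ∨ p.1 ∈ SW ∨ (p.1 ∈ SX ∧ p.2 = true)} β ∧
          ∀ ω, cDoMarg val κ SX ((SY ∪ SZ ∪ SW ∪ SX)ᶜ) locR ω = α ω * β ω :=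
  rule1_classical_general val G hG SY SZ SW SX hYW hYX hsep

end QCM
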